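/- If the subsets A_{s_1}, …, A_{s_m} cover the finite set A and an optimal cover uses OPT subsets, then the greedy set cover algorithm selects at most OPT·(1 + ln|A|) subsets (equivalently, at most H_{|A|}·OPT subsets, where H_n is the n-th harmonic number). -/

import Mathlib

/-! If `G` covers the still uncovered set `I`, some member of `G` meets `I` in at least
`|I| / |G|` elements, and the greedy choice does at least as well; so a step leaves at most
`|I| (1 - 1/|G|)` elements uncovered and, by `log (1 - 1/k) ≤ -1/k`, lowers `|G| log |I|` by at
least one. Hence greedy takes at most `|G| log |A| + 1` steps. -/

/-- One run of the greedy set cover procedure: while some given subset intersects the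
uncovered set `I`, pick a subset `s` maximizing the number `|I ∩ s|` of newly covered
elements, record the contribution `I ∩ s`, and remove it from `I`. -/
noncomputable def greedyCover {α : Type*} [DecidableEq α]
    (F : Finset (Finset α)) (I : Finset α) : List (Finset α) :=
  if h : ∃ s, s ∈ F ∧ (I ∩ s).Nonempty ∧ ∀ t ∈ F, (I ∩ t).card ≤ (I ∩ s).card then
    let s := Classical.choose h
    (I ∩ s) :: greedyCover F (I \ s)
  else []
termination_by I.card
decreasing_by
  obtain ⟨-, hne, -⟩ := Classical.choose_spec h
  obtain ⟨a, ha⟩ := hne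
  simp only [Finset.mem_inter] at ha
  exact Finset.card_lt_card ⟨Finset.sdiff_subset,
    fun hsub => (Finset.mem_sdiff.mp (hsub ha.1)).2 ha.2⟩

open Finset

lemma greedyCover_empty {α : Type*} [DecidableEq α] (F : Finset (Finset α)) :
    greedyCover F ∅ = [] := by
  rw [greedyCover]
  simp

lemma nonempty_of_covers {α : Type*} {G : Finset (Finset α)} {I : Finset α}
    (hcov : ∀ a ∈ I, ∃ s ∈ G, a ∈ s) (hI : I.Nonempty) : G.Nonempty :=
  let ⟨a, ha⟩ := hI
  let ⟨s, hs, _⟩ := hcov a ha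
  ⟨s, hs⟩

lemma card_le_card_mul_card_inter {α : Type*} [DecidableEq α] {G : Finset (Finset α)}
    {I s : Finset α} (hcov : ∀ a ∈ I, ∃ t ∈ G, a ∈ t) (hmax : ∀ t ∈ G, #(I ∩ t) ≤ #(I ∩ s)) :
    #I ≤ #G * #(I ∩ s) :=
  calc #I ≤ #(G.biUnion (I ∩ ·)) := card_le_card fun a ha => by
        obtain ⟨t, ht, hat⟩ := hcov a ha
        exact mem_biUnion.mpr ⟨t, ht, mem_inter.mpr ⟨ha, hat⟩⟩
    _ ≤ ∑ t ∈ G, #(I ∩ t) := card_biUnion_le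
    _ ≤ #G * #(I ∩ s) := sum_le_card_nsmul G _ _ hmax

lemma mul_log_add_one_le_mul_log {k x y : ℝ} (hk : 0 < k) (hx : 0 < x) (hy : 0 < y)
    (h : x ≤ k * (x - y)) : k * Real.log y + 1 ≤ k * Real.log x := by
  have hratio : y / x ≤ 1 - 1 / k := by
    rw [div_le_iff₀ hx]
    field_simp
    linarith
  have hlog : Real.log y - Real.log x ≤ -(1 / k) := by
    rw [← Real.log_div hy.ne' hx.ne']
    linarith [Real.log_le_sub_one_of_pos (div_pos hy hx)]
  have : k * (Real.log y - Real.log x) ≤ -1 := by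
    calc k * (Real.log y - Real.log x) ≤ k * -(1 / k) := by gcongr
      _ = -1 := by field_simp
  linarith

lemma length_greedyCover_le {α : Type*} [DecidableEq α] {F G : Finset (Finset α)}
    (hGF : G ⊆ F) (I : Finset α) (hcov : ∀ a ∈ I, ∃ s ∈ G, a ∈ s) :
    ((greedyCover F I).length : ℝ) ≤ #G * Real.log #I + 1 := by
  fun_induction greedyCover F I with
  | case2 I _ =>
    simp only [List.length_nil, Nat.cast_zero]
    linarith [mul_nonneg (#G).cast_nonneg (Real.log_natCast_nonneg #I)]
  | case1 I h s ih =>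
    obtain ⟨-, hsI, hsmax⟩ := Classical.choose_spec h
    have hG : (0 : ℝ) < #G := by
      exact_mod_cast (nonempty_of_covers hcov (hsI.mono inter_subset_left)).card_pos
    rw [List.length_cons, Nat.cast_succ]
    rcases (I \ s).eq_empty_or_nonempty with hrest | hrest
    · rw [hrest, greedyCover_empty]
      simp only [List.length_nil, Nat.cast_zero]
      linarith [mul_nonneg hG.le (Real.log_natCast_nonneg #I)]
    · have hstep : (#I : ℝ) ≤ #G * #(I ∩ s) := by
        exact_mod_cast card_le_card_mul_card_inter hcov fun t ht => hsmax t (hGF ht)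
      have hsplit : (#I : ℝ) = #(I \ s) + #(I ∩ s) := by
        exact_mod_cast (card_sdiff_add_card_inter I s).symm
      have hkey : (#G : ℝ) * Real.log #(I \ s) + 1 ≤ #G * Real.log #I := by
        apply mul_log_add_one_le_mul_log hG
        · exact_mod_cast (hsI.mono inter_subset_left).card_pos
        · exact_mod_cast hrest.card_pos
        · linear_combination hstep - (#G : ℝ) * hsplit
      linarith [ih fun a ha => hcov a (mem_sdiff.mp ha).1]

/-- Greedy set cover approximation guarantee: if some `OPT` of the given subsets cover `A`
(here: any cover `G ⊆ F` of `A`, in particular an optimal one), then greedy selects at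
most `OPT·(1 + ln |A|)` subsets. -/
theorem greedyCover_approx {α : Type*} [DecidableEq α]
    (F : Finset (Finset α)) (A : Finset α)
    (G : Finset (Finset α)) (hGF : G ⊆ F) (hGcov : ∀ a ∈ A, ∃ s ∈ G, a ∈ s) :
    ((greedyCover F A).length : ℝ) ≤ (G.card : ℝ) * (1 + Real.log A.card) := by
  rcases A.eq_empty_or_nonempty with rfl | hA
  · simp [greedyCover_empty]
  · have hG : (1 : ℝ) ≤ #G := by exact_mod_cast (nonempty_of_covers hGcov hA).card_pos
    have hlength := length_greedyCover_le hGF A hGcov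
    rw [mul_add, mul_one]
    linarith
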